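/- Let q be a complex number with 0 < |q| < 1, let a be a complex number with (aq;q)_m ≠ 0 for all m ≥ 0, and let b be a complex number with b² = aq and (−b;q)_m ≠ 0 for all m ≥ 0. Suppose (α_n, β_n)_{n ≥ 0} is a Bailey pair with parameters (a, q). Define α'_r = b^r q^{r(r−1)/2} α_r for all r ≥ 0 and β'_n = ∑_{j=0}^{n} (−b;q)_j b^j q^{j(j−1)/2} β_j / ((q;q)_{n−j} (−b;q)_n) for all n ≥ 0. Then (α'_n, β'_n)_{n ≥ 0} is a Bailey pair with parameters (a, q). -/

import Mathlib

open Finset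

/-- Finite q-Pochhammer symbol `(x;q)_n`. -/
noncomputable def qPoch (q x : ℂ) (n : ℕ) : ℂ :=
  ∏ j ∈ Finset.range n, (1 - x * q ^ j)

/-- `(α, β)` is a Bailey pair with parameters `(a, q)` if
`β_n = ∑_{r=0}^n α_r / ((q;q)_{n-r} (aq;q)_{n+r})` for all `n ≥ 0`. -/
def IsBaileyPair (q a : ℂ) (α β : ℕ → ℂ) : Prop :=
  ∀ n : ℕ, β n = ∑ r ∈ Finset.range (n + 1),
    α r / (qPoch q q (n - r) * qPoch q (a * q) (n + r))

lemma qPoch_zero (q x : ℂ) : qPoch q x 0 = 1 := by simp [qPoch]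

lemma qPoch_succ (q x : ℂ) (n : ℕ) :
    qPoch q x (n + 1) = qPoch q x n * (1 - x * q ^ n) := by
  simp [qPoch, Finset.prod_range_succ]

lemma qPoch_succ' (q x : ℂ) (n : ℕ) :
    qPoch q x (n + 1) = (1 - x) * qPoch q (x * q) n := by
  rw [qPoch, Finset.prod_range_succ', qPoch]
  simp only [pow_zero, mul_one, mul_comm]
  congr 1
  apply Finset.prod_congr rfl
  intro j _
  ring

lemma qPoch_add (q x : ℂ) (m n : ℕ) :
    qPoch q x (m + n) = qPoch q x m * qPoch q (x * q ^ m) n := by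
  induction n with
  | zero => simp [qPoch_zero]
  | succ n ih =>
      rw [← Nat.add_assoc, qPoch_succ, ih, qPoch_succ, mul_assoc]
      congr 2
      rw [mul_assoc, ← pow_add]

lemma qq_ne_zero {q : ℂ} (hq1 : ‖q‖ < 1) (m : ℕ) : qPoch q q m ≠ 0 := by
  rw [qPoch]
  apply Finset.prod_ne_zero_iff.2
  intro j _ h
  have h1 : q * q ^ j = 1 := by linear_combination -h
  have h2 : ‖q * q ^ j‖ < 1 := by
    rw [norm_mul, norm_pow]
    calc ‖q‖ * ‖q‖ ^ j ≤ ‖q‖ * 1 := by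
          apply mul_le_mul_of_nonneg_left _ (norm_nonneg q)
          exact pow_le_one₀ (norm_nonneg q) hq1.le
      _ < 1 := by rw [mul_one]; exact hq1
  rw [h1] at h2; simp at h2

/-- Gaussian binomial coefficient. -/
noncomputable def gb (q : ℂ) (m k : ℕ) : ℂ :=
  if k ≤ m then qPoch q q m / (qPoch q q k * qPoch q q (m - k)) else 0

lemma gb_zero {q : ℂ} (hq1 : ‖q‖ < 1) (m : ℕ) : gb q m 0 = 1 := by
  simp [gb, qPoch_zero, div_self (qq_ne_zero hq1 m)]

lemma gb_of_gt (q : ℂ) {m k : ℕ} (h : m < k) : gb q m k = 0 := by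
  simp [gb, Nat.not_le.2 h]

lemma gb_pascal {q : ℂ} (hq1 : ‖q‖ < 1) {m k : ℕ} (hk : k ≤ m) :
    gb q (m + 1) (k + 1) = gb q m k + q ^ (k + 1) * gb q m (k + 1) := by
  rcases eq_or_lt_of_le hk with rfl | hlt
  · rw [gb_of_gt q (Nat.lt_succ_self k), mul_zero, add_zero, gb, gb,
      if_pos (le_refl _), if_pos (le_refl _), Nat.sub_self, Nat.sub_self,
      qPoch_zero, mul_one, mul_one, div_self (qq_ne_zero hq1 (k+1)),
      div_self (qq_ne_zero hq1 k)]
  · have h1 : k + 1 ≤ m := hlt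
    have e1 : m + 1 - (k + 1) = m - k := by omega
    have e2 : m - k = (m - (k+1)) + 1 := by omega
    rw [gb, gb, gb, if_pos (by omega), if_pos (by omega), if_pos (by omega), e1]
    rw [qPoch_succ q q m, qPoch_succ q q k, e2, qPoch_succ q q (m - (k+1))]
    have nz1 := qq_ne_zero hq1 m
    have nz2 := qq_ne_zero hq1 k
    have nz3 := qq_ne_zero hq1 (m - (k+1))
    have f1 : (1 : ℂ) - q * q ^ m ≠ 0 := by
      have := qq_ne_zero hq1 (m+1); rw [qPoch_succ] at this
      exact right_ne_zero_of_mul this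
    have f2 : (1 : ℂ) - q * q ^ k ≠ 0 := by
      have := qq_ne_zero hq1 (k+1); rw [qPoch_succ] at this
      exact right_ne_zero_of_mul this
    have f3 : (1 : ℂ) - q * q ^ (m - (k+1)) ≠ 0 := by
      have := qq_ne_zero hq1 (m - (k+1) + 1); rw [qPoch_succ] at this
      exact right_ne_zero_of_mul this
    have he : (k+1) + (m - (k+1)) = m := by omega
    have hpow : q ^ (k + 1) * (q * q ^ (m - (k+1))) = q * q ^ m := by
      calc q ^ (k+1) * (q * q ^ (m - (k+1))) = q * (q^(k+1) * q^(m-(k+1))) := by ring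
        _ = q * q ^ m := by rw [← pow_add, he]
    field_simp
    linear_combination hpow

lemma tri_succ (k : ℕ) : (k+1) * ((k+1) - 1) / 2 = k * (k-1) / 2 + k := by
  have h3 : (k+1) * ((k+1) - 1) = k * (k-1) + 2 * k := by
    cases k with
    | zero => rfl
    | succ s => simp only [Nat.add_sub_cancel]; ring
  obtain ⟨A, hA⟩ : 2 ∣ k * (k - 1) := by
    cases k with
    | zero => simp
    | succ s =>
      simpa [Nat.add_sub_cancel, mul_comm] using (Nat.even_mul_succ_self s).two_dvd
  omega

lemma tri_add (r k : ℕ) :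
    (r + k) * ((r + k) - 1) / 2 = r * (r - 1) / 2 + r * k + k * (k - 1) / 2 := by
  induction k with
  | zero => simp
  | succ k ih =>
    have h1 : r + (k + 1) = (r + k) + 1 := by omega
    rw [h1, tri_succ, ih, tri_succ]
    have : r * (k + 1) = r * k + r := by ring
    omega

/-- polynomial form of the q-Chu-Vandermonde sum (ρ₁ → ∞ style special case). -/
lemma chu {q : ℂ} (hq1 : ‖q‖ < 1) :
    ∀ (m : ℕ) (a z : ℂ),
    ∑ k ∈ Finset.range (m + 1),
      gb q m k * qPoch q a k * qPoch q (-(a*z) * q ^ k) (m - k) * z ^ k * q ^ (k * (k-1) / 2)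
    = qPoch q (-z) m := by
  intro m
  induction m with
  | zero => intro a z; simp [gb_zero hq1, qPoch_zero]
  | succ m ih =>
    intro a z
    set R : ℕ → ℂ := fun j =>
      qPoch q a j * qPoch q (-(a*z) * q ^ j) (m + 1 - j) * z ^ j * q ^ (j * (j-1) / 2) with hR
    have hsum : ∀ k, gb q (m+1) k * qPoch q a k * qPoch q (-(a*z) * q ^ k) (m + 1 - k)
        * z ^ k * q ^ (k * (k-1) / 2) = gb q (m+1) k * R k := by
      intro k; rw [hR]; ring
    calc ∑ k ∈ Finset.range (m + 2),
          gb q (m+1) k * qPoch q a k * qPoch q (-(a*z) * q ^ k) (m + 1 - k)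
            * z ^ k * q ^ (k * (k-1) / 2)
        = ∑ k ∈ Finset.range (m + 2), gb q (m+1) k * R k := by
          exact Finset.sum_congr rfl fun k _ => hsum k
      _ = ∑ k ∈ Finset.range (m + 1), gb q (m+1) (k+1) * R (k+1) + gb q (m+1) 0 * R 0 := by
          rw [Finset.sum_range_succ']
      _ = ∑ k ∈ Finset.range (m + 1), (gb q m k * R (k+1) + q ^ (k+1) * gb q m (k+1) * R (k+1))
            + gb q (m+1) 0 * R 0 := by
          congr 1
          apply Finset.sum_congr rfl
          intro k hk
          rw [gb_pascal hq1 (by simpa using Nat.lt_succ_iff.mp (Finset.mem_range.mp hk))]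
          ring
      _ = ∑ k ∈ Finset.range (m + 1), gb q m k * R (k+1)
            + (∑ k ∈ Finset.range (m + 1), q ^ (k+1) * gb q m (k+1) * R (k+1)
               + q ^ 0 * gb q m 0 * R 0) := by
          rw [Finset.sum_add_distrib, gb_zero hq1, pow_zero, gb_zero hq1]
          ring
      _ = ∑ k ∈ Finset.range (m + 1), gb q m k * R (k+1)
            + ∑ k ∈ Finset.range (m + 2), q ^ k * gb q m k * R k := by
          rw [Finset.sum_range_succ' (fun k => q ^ k * gb q m k * R k)]
      _ = ∑ k ∈ Finset.range (m + 1), gb q m k * R (k+1)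
            + ∑ k ∈ Finset.range (m + 1), q ^ k * gb q m k * R k := by
          rw [Finset.sum_range_succ (fun k => q ^ k * gb q m k * R k) (m+1),
            gb_of_gt q (Nat.lt_succ_self m)]
          ring
      _ = ∑ k ∈ Finset.range (m + 1), (1 + z) *
            (gb q m k * qPoch q a k * qPoch q (-(a*(z*q)) * q ^ k) (m - k)
              * (z*q) ^ k * q ^ (k * (k-1) / 2)) := by
          rw [← Finset.sum_add_distrib]
          apply Finset.sum_congr rfl
          intro k hk
          have hkm : k ≤ m := Nat.lt_succ_iff.mp (Finset.mem_range.mp hk)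
          have e1 : m + 1 - (k + 1) = m - k := by omega
          have e2 : m + 1 - k = (m - k) + 1 := by omega
          have harg : (-(a*z) * q ^ k) * q = -(a*z) * q ^ (k+1) := by rw [pow_succ]; ring
          have harg2 : -(a*(z*q)) * q ^ k = -(a*z) * q ^ (k+1) := by rw [pow_succ]; ring
          rw [hR]
          simp only [e1, e2]
          rw [qPoch_succ q a k, qPoch_succ' q (-(a*z) * q ^ k) (m - k), harg,
            tri_succ k, pow_add, harg2, mul_pow]
          ring
      _ = (1 + z) * ∑ k ∈ Finset.range (m + 1),
            gb q m k * qPoch q a k * qPoch q (-(a*(z*q)) * q ^ k) (m - k)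
              * (z*q) ^ k * q ^ (k * (k-1) / 2) := by
          rw [Finset.mul_sum]
      _ = (1 + z) * qPoch q (-(z*q)) m := by rw [ih a (z*q)]
      _ = qPoch q (-z) (m + 1) := by
          rw [qPoch_succ' q (-z) m, neg_mul]
          ring_nf

/-- The `ρ₁ → ∞`, `ρ₂ = -√(aq)` case of Bailey's lemma, with `b` a fixed square root
of `aq` (so `b^j q^{j(j-1)/2} = a^{j/2} q^{j²/2}`). -/
theorem bailey_lemma_sqrt (q a b : ℂ) (hq0 : 0 < ‖q‖) (hq1 : ‖q‖ < 1)
    (hb : b ^ 2 = a * q)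
    (haq : ∀ m : ℕ, qPoch q (a * q) m ≠ 0)
    (hbne : ∀ m : ℕ, qPoch q (-b) m ≠ 0)
    (α β : ℕ → ℂ) (hpair : IsBaileyPair q a α β) :
    IsBaileyPair q a
      (fun r => b ^ r * q ^ (r * (r - 1) / 2) * α r)
      (fun n => ∑ j ∈ Finset.range (n + 1),
        qPoch q (-b) j * b ^ j * q ^ (j * (j - 1) / 2) * β j /
          (qPoch q q (n - j) * qPoch q (-b) n)) := by
  intro n
  dsimp only
  calc ∑ j ∈ Finset.range (n + 1),
        qPoch q (-b) j * b ^ j * q ^ (j * (j - 1) / 2) * β j /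
          (qPoch q q (n - j) * qPoch q (-b) n)
      = ∑ j ∈ Finset.range (n + 1), ∑ r ∈ Finset.range (j + 1),
          qPoch q (-b) j * b ^ j * q ^ (j * (j - 1) / 2) *
            (α r / (qPoch q q (j - r) * qPoch q (a * q) (j + r))) /
          (qPoch q q (n - j) * qPoch q (-b) n) := by
        apply Finset.sum_congr rfl
        intro j _
        rw [hpair j, Finset.mul_sum, Finset.sum_div]
    _ = ∑ r ∈ Finset.range (n + 1),
          b ^ r * q ^ (r * (r - 1) / 2) * α r /
            (qPoch q q (n - r) * qPoch q (a * q) (n + r)) := by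
        simp only [Finset.range_eq_Ico]
        rw [← Finset.sum_Ico_Ico_comm]
        apply Finset.sum_congr rfl
        intro r hr
        have hrn : r ≤ n := by
          have := (Finset.mem_Ico.mp hr).2; omega
        -- abbreviations
        obtain ⟨m, hm⟩ : ∃ m, m = n - r := ⟨_, rfl⟩
        obtain ⟨x, hx⟩ : ∃ x, x = b * q ^ r := ⟨_, rfl⟩
        have hxb : (-b) * q ^ r = -x := by rw [hx]; ring
        have hsplitb : ∀ t, qPoch q (-b) (r + t) = qPoch q (-b) r * qPoch q (-x) t := by
          intro t; rw [qPoch_add, hxb]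
        have hx2 : (a * q) * q ^ (2 * r) = x * x := by
          rw [← hb, hx]; ring
        have hsplita : ∀ t, qPoch q (a * q) (2 * r + t)
            = qPoch q (a * q) (2 * r) * qPoch q (x * x) t := by
          intro t; rw [qPoch_add, hx2]
        have hxkne : ∀ t, qPoch q (-x) t ≠ 0 := by
          intro t
          have h := hbne (r + t)
          rw [hsplitb t] at h
          exact right_ne_zero_of_mul h
        have hx2ne : ∀ t, qPoch q (x * x) t ≠ 0 := by
          intro t
          have h := haq (2 * r + t)
          rw [hsplita t] at h
          exact right_ne_zero_of_mul h
        have hbn : qPoch q (-b) n = qPoch q (-b) r * qPoch q (-x) m := by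
          rw [show n = r + m by omega, hsplitb m]
        have hchu := chu hq1 m (-x) x
        simp only [neg_mul, neg_neg] at hchu
        rw [Finset.sum_Ico_eq_sum_range, show n + 1 - r = m + 1 by omega]
        calc ∑ k ∈ Finset.range (m + 1),
              qPoch q (-b) (r + k) * b ^ (r + k) * q ^ ((r + k) * ((r + k) - 1) / 2) *
                (α r / (qPoch q q (r + k - r) * qPoch q (a * q) (r + k + r))) /
              (qPoch q q (n - (r + k)) * qPoch q (-b) n)
            = ∑ k ∈ Finset.range (m + 1),
                (b ^ r * q ^ (r * (r - 1) / 2) * α r * qPoch q (-b) r /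
                  (qPoch q q m * qPoch q (-b) n * qPoch q (a * q) (2 * r) *
                    qPoch q (x * x) m)) *
                (gb q m k * qPoch q (-x) k * qPoch q (x * x * q ^ k) (m - k) *
                  x ^ k * q ^ (k * (k - 1) / 2)) := by
              apply Finset.sum_congr rfl
              intro k hk
              have hkm : k ≤ m := Nat.lt_succ_iff.mp (Finset.mem_range.mp hk)
              have i1 : r + k - r = k := by omega
              have i2 : n - (r + k) = m - k := by omega
              have i3 : r + k + r = 2 * r + k := by omega
              have hx2split : qPoch q (x * x * q ^ k) (m - k)
                  = qPoch q (x * x) m / qPoch q (x * x) k := by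
                have h := qPoch_add q (x * x) k (m - k)
                rw [show k + (m - k) = m by omega] at h
                rw [eq_div_iff (hx2ne k)]
                linear_combination -h
              have hxk : x ^ k = b ^ k * q ^ (r * k) := by
                rw [hx, mul_pow, ← pow_mul]
              rw [i1, i2, i3, hsplitb k, hsplita k, hbn, tri_add r k, gb, if_pos hkm,
                hx2split, hxk, pow_add, pow_add, pow_add]
              have nz1 := qq_ne_zero hq1 m
              have nz2 := qq_ne_zero hq1 k
              have nz3 := qq_ne_zero hq1 (m - k)
              have nz4 := hbne r
              have nz5 := hxkne m
              have nz6 := hxkne k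
              have nz7 := hx2ne m
              have nz8 := hx2ne k
              have nz9 := haq (2 * r)
              generalize hP1 : qPoch q (-b) r = P1
              rw [hP1] at nz4
              generalize hP2 : qPoch q (-x) k = P2
              rw [hP2] at nz6
              generalize hP3 : qPoch q (-x) m = P3
              rw [hP3] at nz5
              generalize hP4 : qPoch q (x * x) m = P4
              rw [hP4] at nz7
              generalize hP5 : qPoch q (x * x) k = P5
              rw [hP5] at nz8
              generalize hP6 : qPoch q q m = P6
              rw [hP6] at nz1
              generalize hP7 : qPoch q q k = P7
              rw [hP7] at nz2
              generalize hP8 : qPoch q q (m - k) = P8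
              rw [hP8] at nz3
              generalize hP9 : qPoch q (a * q) (2 * r) = P9
              rw [hP9] at nz9
              field_simp [nz1, nz2, nz3, nz4, nz5, nz6, nz7, nz8, nz9]
          _ = (b ^ r * q ^ (r * (r - 1) / 2) * α r * qPoch q (-b) r /
                  (qPoch q q m * qPoch q (-b) n * qPoch q (a * q) (2 * r) *
                    qPoch q (x * x) m)) * qPoch q (-x) m := by
              rw [← Finset.mul_sum, hchu]
          _ = b ^ r * q ^ (r * (r - 1) / 2) * α r /
                (qPoch q q (n - r) * qPoch q (a * q) (n + r)) := by
              rw [show n + r = 2 * r + m by omega, hsplita m, hbn, show n - r = m from hm.symm]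
              have nz1 := qq_ne_zero hq1 m
              have nz4 := hbne r
              have nz5 := hxkne m
              have nz7 := hx2ne m
              have nz9 := haq (2 * r)
              generalize hP1 : qPoch q (-b) r = P1
              rw [hP1] at nz4
              generalize hP3 : qPoch q (-x) m = P3
              rw [hP3] at nz5
              generalize hP4 : qPoch q (x * x) m = P4
              rw [hP4] at nz7
              generalize hP6 : qPoch q q m = P6
              rw [hP6] at nz1
              generalize hP9 : qPoch q (a * q) (2 * r) = P9
              rw [hP9] at nz9
              rw [div_mul_eq_mul_div, div_eq_div_iff (by simp [nz1, nz4, nz5, nz7, nz9])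
                (by simp [nz1, nz7, nz9])]
              ring
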